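/- For bounded linear operators L, P on a Banach space with P^2 = P and Q = I - P, the Mori-Zwanzig identity holds: for every vector u and t \ge 0, e^{tL} L u = e^{tL} P L u + e^{tQL} Q L u + \int_0^t e^{(t-s)L} P L e^{sQL} Q L u \, ds. -/

import Mathlib

/-! Dyson's formula `e^{tA} = e^{tB} + ∫₀ᵗ e^{(t-s)A} (A - B) e^{sB} ds` holds in any real Banach
algebra: `s ↦ e^{(t-s)A} e^{sB}` has derivative `-e^{(t-s)A} (A - B) e^{sB}`, so the formula is the
fundamental theorem of calculus between `s = 0` and `s = t`. For `A = L` and `B = QL` we get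
`A - B = PL`; applying the formula to `QLu` and adding `e^{tL} PLu` gives the identity, since
`Lu = PLu + QLu`. -/

open NormedSpace intervalIntegral

section Dyson

variable {𝔸 : Type*} [NormedRing 𝔸] [NormedAlgebra ℝ 𝔸] [CompleteSpace 𝔸]

theorem continuous_exp_smul (A : 𝔸) : Continuous fun s : ℝ => exp (s • A) :=
  continuous_iff_continuousAt.2 fun s => (hasDerivAt_exp_smul_const A s).continuousAt

theorem continuous_exp_sub_smul_mul_mul_exp_smul (A B C : 𝔸) (t : ℝ) :
    Continuous fun s : ℝ => exp ((t - s) • A) * C * exp (s • B) :=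
  (((continuous_exp_smul A).comp (continuous_sub_left t)).mul continuous_const).mul
    (continuous_exp_smul B)

theorem hasDerivAt_exp_sub_smul_mul_exp_smul (A B : 𝔸) (t s : ℝ) :
    HasDerivAt (fun s : ℝ => exp ((t - s) • A) * exp (s • B))
      (-(exp ((t - s) • A) * (A - B) * exp (s • B))) s := by
  have hA : HasDerivAt (fun s : ℝ => exp ((t - s) • A)) (-(exp ((t - s) • A) * A)) s := by
    simpa [Function.comp_def] using
      (hasDerivAt_exp_smul_const A (t - s)).scomp s ((hasDerivAt_id s).const_sub t)
  refine (hA.mul (hasDerivAt_exp_smul_const' B s)).congr_deriv ?_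
  noncomm_ring

theorem exp_smul_eq_exp_smul_add_integral (A B : 𝔸) (t : ℝ) :
    exp (t • A) = exp (t • B) + ∫ s in (0:ℝ)..t, exp ((t - s) • A) * (A - B) * exp (s • B) := by
  have hFTC := integral_eq_sub_of_hasDerivAt
    (fun s _ => hasDerivAt_exp_sub_smul_mul_exp_smul A B t s)
    ((continuous_exp_sub_smul_mul_mul_exp_smul A B (A - B) t).neg.intervalIntegrable 0 t)
  simp only [integral_neg, sub_self, zero_smul, exp_zero, one_mul, sub_zero, mul_one] at hFTC
  rw [neg_eq_iff_eq_neg, neg_sub] at hFTC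
  rw [hFTC]
  abel

end Dyson

theorem mori_zwanzig_identity_general {E : Type*} [NormedAddCommGroup E] [NormedSpace ℝ E]
    [CompleteSpace E]
    (L P : E →L[ℝ] E) (Q : E →L[ℝ] E) (hQ : Q = 1 - P)
    (u : E) (t : ℝ) :
    exp (t • L) (L u) =
      exp (t • L) (P (L u)) + exp (t • (Q * L)) (Q (L u)) +
        ∫ s in (0:ℝ)..t, exp ((t - s) • L) (P (L (exp (s • (Q * L)) (Q (L u))))) := by
  have hPL : L - Q * L = P * L := by rw [hQ]; noncomm_ring
  have hLu : L u = P (L u) + Q (L u) := by simp [hQ]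
  have hDyson := exp_smul_eq_exp_smul_add_integral L (Q * L) t
  rw [hPL] at hDyson
  have hIntegral := ContinuousLinearMap.intervalIntegral_apply
    ((continuous_exp_sub_smul_mul_mul_exp_smul L (Q * L) (P * L) t).intervalIntegrable
      (μ := MeasureTheory.volume) 0 t)
    (Q (L u))
  calc exp (t • L) (L u) = exp (t • L) (P (L u)) + exp (t • L) (Q (L u)) := by
        rw [← map_add, ← hLu]
    _ = _ := by
        rw [add_assoc]
        congr 1
        rw [hDyson, add_apply, hIntegral]
        rfl

/-- The Mori-Zwanzig identity: for bounded operators `L`, `P` with `P² = P`, `Q = I - P`,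
`e^{tL} L u = e^{tL} P L u + e^{tQL} Q L u + ∫_0^t e^{(t-s)L} P L e^{sQL} Q L u ds`. -/
theorem mori_zwanzig_identity {E : Type*} [NormedAddCommGroup E] [NormedSpace ℝ E]
    [CompleteSpace E]
    (L P : E →L[ℝ] E) (hP : P * P = P) (Q : E →L[ℝ] E) (hQ : Q = 1 - P)
    (u : E) (t : ℝ) (ht : 0 ≤ t) :
    exp (t • L) (L u) =
      exp (t • L) (P (L u)) + exp (t • (Q * L)) (Q (L u)) +
        ∫ s in (0:ℝ)..t, exp ((t - s) • L) (P (L (exp (s • (Q * L)) (Q (L u))))) :=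
  mori_zwanzig_identity_general L P Q hQ u t
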